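/- arXiv:2506.13135 — 5 statements merged into one kernel-verified Lean document; each statement's English description precedes it below -/
import Mathlib

section
/- Let n ≥ 1 and let ρ : ℝⁿ → (0,∞) and k : ℝⁿ × ℝⁿ → (0,∞) be continuous functions such that the function (x,y) ↦ (ρ(x)k(x,y) − ρ(y)k(y,x))·log(ρ(x)k(x,y)/(ρ(y)k(y,x))) is integrable on ℝⁿ × ℝⁿ. If ∫_{ℝⁿ}∫_{ℝⁿ} (ρ(x)k(x,y) − ρ(y)k(y,x))·log(ρ(x)k(x,y)/(ρ(y)k(y,x))) dy dx = 0, then ρ(x)k(x,y) = ρ(y)k(y,x) for all x, y ∈ ℝⁿ. -/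
open MeasureTheory

lemma aux_eq_of_mul_log_eq_zero {a b : ℝ} (ha : 0 < a) (hb : 0 < b)
    (h : (a - b) * Real.log (a / b) = 0) : a = b := by
  rcases lt_trichotomy a b with hlt | heq | hgt
  · exfalso
    have h1 : a - b < 0 := sub_neg.mpr hlt
    have h2 : Real.log (a / b) < 0 := by
      apply Real.log_neg (div_pos ha hb)
      rw [div_lt_one hb]; exact hlt
    nlinarith [mul_pos_of_neg_of_neg h1 h2]
  · exact heq
  · exfalso
    have h1 : 0 < a - b := sub_pos.mpr hgt
    have h2 : 0 < Real.log (a / b) := by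
      apply Real.log_pos
      rw [lt_div_iff₀ hb]; linarith
    nlinarith [mul_pos h1 h2]

theorem stmt_1 (n : ℕ) (hn : 1 ≤ n)
    (ρ : (Fin n → ℝ) → ℝ) (k : (Fin n → ℝ) → (Fin n → ℝ) → ℝ)
    (hρpos : ∀ x, 0 < ρ x) (hkpos : ∀ x y, 0 < k x y)
    (hρcont : Continuous ρ)
    (hkcont : Continuous fun p : (Fin n → ℝ) × (Fin n → ℝ) => k p.1 p.2)
    (hint : Integrable (fun p : (Fin n → ℝ) × (Fin n → ℝ) =>
      (ρ p.1 * k p.1 p.2 - ρ p.2 * k p.2 p.1) *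
        Real.log (ρ p.1 * k p.1 p.2 / (ρ p.2 * k p.2 p.1))))
    (hzero : ∫ x, ∫ y,
      (ρ x * k x y - ρ y * k y x) * Real.log (ρ x * k x y / (ρ y * k y x)) = 0) :
    ∀ x y, ρ x * k x y = ρ y * k y x := by
  set F : (Fin n → ℝ) × (Fin n → ℝ) → ℝ := fun p =>
    (ρ p.1 * k p.1 p.2 - ρ p.2 * k p.2 p.1) *
      Real.log (ρ p.1 * k p.1 p.2 / (ρ p.2 * k p.2 p.1)) with hF
  have hpos : ∀ p, 0 ≤ F p := by
    intro p
    rcases lt_trichotomy (ρ p.1 * k p.1 p.2) (ρ p.2 * k p.2 p.1) with h | h | h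
    · have h1 : ρ p.1 * k p.1 p.2 - ρ p.2 * k p.2 p.1 < 0 := by linarith
      have h2 : Real.log (ρ p.1 * k p.1 p.2 / (ρ p.2 * k p.2 p.1)) < 0 := by
        apply Real.log_neg (div_pos (mul_pos (hρpos _) (hkpos _ _)) (mul_pos (hρpos _) (hkpos _ _)))
        rw [div_lt_one (mul_pos (hρpos _) (hkpos _ _))]; exact h
      exact le_of_lt (mul_pos_of_neg_of_neg h1 h2)
    · simp [hF, h]
    · have h1 : 0 < ρ p.1 * k p.1 p.2 - ρ p.2 * k p.2 p.1 := by linarith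
      have h2 : 0 < Real.log (ρ p.1 * k p.1 p.2 / (ρ p.2 * k p.2 p.1)) := by
        apply Real.log_pos
        rw [lt_div_iff₀ (mul_pos (hρpos _) (hkpos _ _))]; linarith
      exact le_of_lt (mul_pos h1 h2)
  have hcont : Continuous F := by
    have hc1 : Continuous fun p : (Fin n → ℝ) × (Fin n → ℝ) => ρ p.1 * k p.1 p.2 :=
      (hρcont.comp continuous_fst).mul hkcont
    have hc2 : Continuous fun p : (Fin n → ℝ) × (Fin n → ℝ) => ρ p.2 * k p.2 p.1 := by
      have := hc1.comp (continuous_swap : Continuous (Prod.swap : _ × _ → _))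
      exact this
    apply Continuous.mul (hc1.sub hc2)
    exact (hc1.div hc2 fun p => ne_of_gt (mul_pos (hρpos _) (hkpos _ _))).log
      fun p => ne_of_gt (div_pos (mul_pos (hρpos _) (hkpos _ _)) (mul_pos (hρpos _) (hkpos _ _)))
  have hzero' : ∫ p, F p = 0 := by
    rw [Measure.volume_eq_prod _ _, MeasureTheory.integral_prod F (by rwa [← Measure.volume_eq_prod _ _])]
    exact hzero
  have hae : F =ᵐ[volume] 0 := by
    have := (integral_eq_zero_iff_of_nonneg hpos hint).mp hzero'
    exact this
  have heq : F = 0 := hcont.ae_eq_iff_eq volume continuous_const |>.mp hae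
  intro x y
  have : F (x, y) = 0 := by rw [heq]; rfl
  exact aux_eq_of_mul_log_eq_zero (mul_pos (hρpos _) (hkpos _ _)) (mul_pos (hρpos _) (hkpos _ _)) this
end

section
/- Let n ≥ 1 and β > 0. Let A : ℝⁿ → ℝ^{n×n} be continuous with A(x) symmetric positive definite for every x, let b : ℝⁿ → ℝⁿ be continuous, let ρ : ℝⁿ → (0,∞) be continuously differentiable, and let k : ℝⁿ × ℝⁿ → (0,∞) be continuous. Define the local probability current j^loc(x) := b(x)ρ(x) − β⁻¹A(x)∇ρ(x) and the nonlocal probability current j^nl(x,y) := ρ(x)k(x,y) − ρ(y)k(y,x), and assume that x ↦ j^loc(x)ᵀA(x)⁻¹j^loc(x)/ρ(x) is integrable on ℝⁿ and that (x,y) ↦ j^nl(x,y)·log(ρ(x)k(x,y)/(ρ(y)k(y,x))) is integrable on ℝⁿ × ℝⁿ. Define the entropy production rate e_p := β∫_{ℝⁿ} j^loc(x)ᵀA(x)⁻¹j^loc(x)/ρ(x) dx + (1/2)∫_{ℝⁿ}∫_{ℝⁿ} j^nl(x,y)·log(ρ(x)k(x,y)/(ρ(y)k(y,x))) dy dx.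 Then e_p ≥ 0, and e_p = 0 if and only if j^loc(x) = 0 and j^nl(x,y) = 0 for all x, y ∈ ℝⁿ. -/
/-!
Both integrands of `e_p` are pointwise nonnegative: the local one because `A(x)⁻¹` is positive
definite and `ρ > 0`, the nonlocal one because `(a - b) log (a / b) ≥ 0` for `a, b > 0`, with
equality only for `a = b`. So `e_p ≥ 0`, and `e_p = 0` forces both integrals to vanish. A
continuous nonnegative function with zero integral against Lebesgue measure, which charges every
nonempty open set, vanishes identically; this gives `j^loc ≡ 0` and `ρ(x) k(x,y) = ρ(y) k(y,x)`.
-/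

open MeasureTheory Matrix

/-- The gradient of a scalar function on `ℝⁿ`, given by the partial derivatives. -/
noncomputable def grad {n : ℕ} (f : (Fin n → ℝ) → ℝ) (x : Fin n → ℝ) : Fin n → ℝ :=
  fun i => fderiv ℝ f x (Pi.single i 1)

namespace Real

lemma sub_mul_log_div_nonneg {a b : ℝ} (ha : 0 < a) (hb : 0 < b) :
    0 ≤ (a - b) * log (a / b) := by
  rcases le_total a b with hab | hab
  · exact mul_nonneg_of_nonpos_of_nonpos (sub_nonpos.2 hab)
      (log_nonpos (div_pos ha hb).le ((div_le_one hb).2 hab))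
  · exact mul_nonneg (sub_nonneg.2 hab) (log_nonneg ((one_le_div hb).2 hab))

lemma sub_mul_log_div_eq_zero_iff {a b : ℝ} (ha : 0 < a) (hb : 0 < b) :
    (a - b) * log (a / b) = 0 ↔ a = b := by
  refine ⟨fun h => by_contra fun hab => ?_, fun h => by simp [h]⟩
  exact mul_ne_zero (sub_ne_zero.2 hab)
    (log_ne_zero_of_pos_of_ne_one (div_pos ha hb) ((div_eq_one_iff_eq hb.ne').not.2 hab)) h

end Real

theorem Continuous.matrix_inv {X 𝕜 m : Type*} [TopologicalSpace X] [Field 𝕜] [TopologicalSpace 𝕜]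
    [IsTopologicalRing 𝕜] [ContinuousInv₀ 𝕜] [Fintype m] [DecidableEq m]
    {A : X → Matrix m m 𝕜} (hA : Continuous A) (hdet : ∀ x, (A x).det ≠ 0) :
    Continuous fun x => (A x)⁻¹ := by
  simp only [Matrix.inv_def, Ring.inverse_eq_inv]
  exact (hA.matrix_det.inv₀ hdet).smul hA.matrix_adjugate

theorem ContDiff.continuous_grad {n : ℕ} {f : (Fin n → ℝ) → ℝ} (hf : ContDiff ℝ 1 f) :
    Continuous (grad f) :=
  continuous_pi fun _ => (hf.continuous_fderiv one_ne_zero).clm_apply continuous_const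

theorem Matrix.PosDef.dotProduct_mulVec_div_nonneg {m : Type*} [Fintype m] {M : Matrix m m ℝ}
    (hM : M.PosDef) (v : m → ℝ) {r : ℝ} (hr : 0 < r) : 0 ≤ (v ⬝ᵥ M *ᵥ v) / r :=
  div_nonneg (by simpa using hM.posSemidef.dotProduct_mulVec_nonneg v) hr.le

theorem Matrix.PosDef.dotProduct_mulVec_div_eq_zero_iff {m : Type*} [Fintype m]
    {M : Matrix m m ℝ} (hM : M.PosDef) (v : m → ℝ) {r : ℝ} (hr : 0 < r) :
    (v ⬝ᵥ M *ᵥ v) / r = 0 ↔ v = 0 := by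
  rw [div_eq_zero_iff, or_iff_left hr.ne']
  refine ⟨fun h => by_contra fun hv => ?_, fun h => by simp [h]⟩
  simpa [h] using hM.dotProduct_mulVec_pos hv

section IntegralOfContinuous

variable {X : Type*} [TopologicalSpace X] [MeasurableSpace X]
  {μ : Measure X} [μ.IsOpenPosMeasure]

theorem Continuous.integral_eq_zero_iff_of_nonneg {f : X → ℝ} (hf : Continuous f)
    (hf0 : ∀ x, 0 ≤ f x) (hfi : Integrable f μ) : ∫ x, f x ∂μ = 0 ↔ ∀ x, f x = 0 := by
  rw [MeasureTheory.integral_eq_zero_iff_of_nonneg hf0 hfi, hf.ae_eq_iff_eq μ continuous_zero, funext_iff]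
  rfl

theorem integral_dotProduct_inv_mulVec_div_nonneg_and_eq_zero_iff {m : Type*} [Fintype m]
    [DecidableEq m] {A : X → Matrix m m ℝ} {j : X → m → ℝ} {ρ : X → ℝ}
    (hA : Continuous A) (hApos : ∀ x, (A x).PosDef) (hj : Continuous j) (hρ : Continuous ρ)
    (hρpos : ∀ x, 0 < ρ x) (hint : Integrable (fun x => (j x ⬝ᵥ (A x)⁻¹ *ᵥ j x) / ρ x) μ) :
    0 ≤ ∫ x, (j x ⬝ᵥ (A x)⁻¹ *ᵥ j x) / ρ x ∂μ ∧
      (∫ x, (j x ⬝ᵥ (A x)⁻¹ *ᵥ j x) / ρ x ∂μ = 0 ↔ ∀ x, j x = 0) := by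
  have hnonneg x := (hApos x).inv.dotProduct_mulVec_div_nonneg (j x) (hρpos x)
  have hcont : Continuous fun x => (j x ⬝ᵥ (A x)⁻¹ *ᵥ j x) / ρ x :=
    (hj.dotProduct ((hA.matrix_inv fun x => (hApos x).det_pos.ne').matrix_mulVec hj)).div hρ
      fun x => (hρpos x).ne'
  refine ⟨integral_nonneg hnonneg, ?_⟩
  rw [hcont.integral_eq_zero_iff_of_nonneg hnonneg hint]
  exact forall_congr' fun x => (hApos x).inv.dotProduct_mulVec_div_eq_zero_iff (j x) (hρpos x)

theorem integral_integral_sub_mul_log_div_nonneg_and_eq_zero_iff [SFinite μ] {r : X → X → ℝ}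
    (hr : Continuous fun p : X × X => r p.1 p.2) (hrpos : ∀ x y, 0 < r x y)
    (hint : Integrable (fun p : X × X => (r p.1 p.2 - r p.2 p.1) * Real.log (r p.1 p.2 / r p.2 p.1))
      (μ.prod μ)) :
    0 ≤ ∫ x, ∫ y, (r x y - r y x) * Real.log (r x y / r y x) ∂μ ∂μ ∧
      (∫ x, ∫ y, (r x y - r y x) * Real.log (r x y / r y x) ∂μ ∂μ = 0 ↔
        ∀ x y, r x y = r y x) := by
  have hnonneg (p : X × X) := Real.sub_mul_log_div_nonneg (hrpos p.1 p.2) (hrpos p.2 p.1)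
  have hr' : Continuous fun p : X × X => r p.2 p.1 := hr.comp continuous_swap
  have hcont : Continuous fun p : X × X =>
      (r p.1 p.2 - r p.2 p.1) * Real.log (r p.1 p.2 / r p.2 p.1) :=
    (hr.sub hr').mul ((hr.div hr' fun p => (hrpos p.2 p.1).ne').log
      fun p => (div_pos (hrpos p.1 p.2) (hrpos p.2 p.1)).ne')
  rw [integral_integral hint]
  refine ⟨integral_nonneg hnonneg, ?_⟩
  rw [hcont.integral_eq_zero_iff_of_nonneg hnonneg hint, Prod.forall]
  exact forall₂_congr fun x y => Real.sub_mul_log_div_eq_zero_iff (hrpos x y) (hrpos y x)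

end IntegralOfContinuous

theorem stmt_3_general (n : ℕ) (β : ℝ) (hβ : 0 < β)
    (A : (Fin n → ℝ) → Matrix (Fin n) (Fin n) ℝ)
    (b : (Fin n → ℝ) → (Fin n → ℝ))
    (ρ : (Fin n → ℝ) → ℝ) (k : (Fin n → ℝ) → (Fin n → ℝ) → ℝ)
    (hAcont : Continuous A) (hApos : ∀ x, (A x).PosDef)
    (hbcont : Continuous b)
    (hρ : ContDiff ℝ 1 ρ) (hρpos : ∀ x, 0 < ρ x)
    (hkcont : Continuous fun p : (Fin n → ℝ) × (Fin n → ℝ) => k p.1 p.2)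
    (hkpos : ∀ x y, 0 < k x y)
    (jloc : (Fin n → ℝ) → (Fin n → ℝ))
    (hjloc : ∀ x, jloc x = ρ x • b x - β⁻¹ • ((A x) *ᵥ grad ρ x))
    (jnl : (Fin n → ℝ) → (Fin n → ℝ) → ℝ)
    (hjnl : ∀ x y, jnl x y = ρ x * k x y - ρ y * k y x)
    (hint1 : Integrable fun x => (jloc x ⬝ᵥ (A x)⁻¹ *ᵥ jloc x) / ρ x)
    (hint2 : Integrable fun p : (Fin n → ℝ) × (Fin n → ℝ) =>
      jnl p.1 p.2 * Real.log (ρ p.1 * k p.1 p.2 / (ρ p.2 * k p.2 p.1)))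
    (ep : ℝ)
    (hep : ep = β * (∫ x, (jloc x ⬝ᵥ (A x)⁻¹ *ᵥ jloc x) / ρ x) +
      (1 / 2) * ∫ x, ∫ y, jnl x y * Real.log (ρ x * k x y / (ρ y * k y x))) :
    0 ≤ ep ∧ (ep = 0 ↔ (∀ x, jloc x = 0) ∧ ∀ x y, jnl x y = 0) := by
  have hjloc_cont : Continuous jloc := by
    rw [funext hjloc]
    exact (hρ.continuous.smul hbcont).sub
      ((hAcont.matrix_mulVec hρ.continuous_grad).const_smul β⁻¹)
  obtain ⟨hloc_nonneg, hloc_zero⟩ := integral_dotProduct_inv_mulVec_div_nonneg_and_eq_zero_iff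
    hAcont hApos hjloc_cont hρ.continuous hρpos hint1
  simp only [hjnl, sub_eq_zero] at hint2 hep ⊢
  rw [Measure.volume_eq_prod] at hint2
  obtain ⟨hnl_nonneg, hnl_zero⟩ := integral_integral_sub_mul_log_div_nonneg_and_eq_zero_iff
    (r := fun x y => ρ x * k x y) ((hρ.continuous.comp continuous_fst).mul hkcont)
    (fun x y => mul_pos (hρpos x) (hkpos x y)) hint2
  rw [hep, ← hloc_zero, ← hnl_zero]
  refine ⟨by positivity, fun h => ⟨by nlinarith, by nlinarith⟩, fun ⟨h1, h2⟩ => by simp [h1, h2]⟩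

theorem stmt_3 (n : ℕ) (hn : 1 ≤ n) (β : ℝ) (hβ : 0 < β)
    (A : (Fin n → ℝ) → Matrix (Fin n) (Fin n) ℝ)
    (b : (Fin n → ℝ) → (Fin n → ℝ))
    (ρ : (Fin n → ℝ) → ℝ) (k : (Fin n → ℝ) → (Fin n → ℝ) → ℝ)
    (hAcont : Continuous A) (hApos : ∀ x, (A x).PosDef)
    (hbcont : Continuous b)
    (hρ : ContDiff ℝ 1 ρ) (hρpos : ∀ x, 0 < ρ x)
    (hkcont : Continuous fun p : (Fin n → ℝ) × (Fin n → ℝ) => k p.1 p.2)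
    (hkpos : ∀ x y, 0 < k x y)
    (jloc : (Fin n → ℝ) → (Fin n → ℝ))
    (hjloc : ∀ x, jloc x = ρ x • b x - β⁻¹ • ((A x) *ᵥ grad ρ x))
    (jnl : (Fin n → ℝ) → (Fin n → ℝ) → ℝ)
    (hjnl : ∀ x y, jnl x y = ρ x * k x y - ρ y * k y x)
    (hint1 : Integrable fun x => (jloc x ⬝ᵥ (A x)⁻¹ *ᵥ jloc x) / ρ x)
    (hint2 : Integrable fun p : (Fin n → ℝ) × (Fin n → ℝ) =>
      jnl p.1 p.2 * Real.log (ρ p.1 * k p.1 p.2 / (ρ p.2 * k p.2 p.1)))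
    (ep : ℝ)
    (hep : ep = β * (∫ x, (jloc x ⬝ᵥ (A x)⁻¹ *ᵥ jloc x) / ρ x) +
      (1 / 2) * ∫ x, ∫ y, jnl x y * Real.log (ρ x * k x y / (ρ y * k y x))) :
    0 ≤ ep ∧ (ep = 0 ↔ (∀ x, jloc x = 0) ∧ ∀ x y, jnl x y = 0) :=
  stmt_3_general n β hβ A b ρ k hAcont hApos hbcont hρ hρpos hkcont hkpos jloc hjloc jnl hjnl hint1
    hint2 ep hep
end

section
/- Let n ≥ 1 and β > 0. Let A : ℝⁿ → ℝ^{n×n} be continuously differentiable with A(x) symmetric for every x, let b : ℝⁿ → ℝⁿ be continuous, and let ρ : ℝⁿ → (0,∞) be continuously differentiable. Then for all smooth compactly supported f, g : ℝⁿ → ℝ, ∫_{ℝⁿ} [b(x)·∇f(x) + β⁻¹∇·(A(x)∇f(x))] g(x) ρ(x) dx − ∫_{ℝⁿ} [b(x)·∇g(x) + β⁻¹∇·(A(x)∇g(x))] f(x) ρ(x) dx = ∫_{ℝⁿ} ⟨b(x) − β⁻¹A(x)∇log ρ(x), g(x)∇f(x) − f(x)∇g(x)⟩ ρ(x) dx.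 -/
/-! With `w = ρ (g A∇f - f A∇g)`, the product rule, the symmetry of `A` and `ρ ∇log ρ = ∇ρ` give
the pointwise identity `(L₁f) g ρ - (L₁g) f ρ = ⟨b - β⁻¹ A∇log ρ, g∇f - f∇g⟩ ρ + β⁻¹ ∇·w`.
The field `w` is `C¹` with compact support, so `∫ ∇·w = 0`: each `∫ ∂ᵢwᵢ` vanishes by integrating
by parts against the constant `1`. -/

open MeasureTheory Matrix

/-- The divergence of a vector field on `ℝⁿ`. -/
noncomputable def dive {n : ℕ} (v : (Fin n → ℝ) → (Fin n → ℝ)) (x : Fin n → ℝ) : ℝ :=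
  ∑ i, fderiv ℝ (fun y => v y i) x (Pi.single i 1)

theorem Matrix.IsSymm.dotProduct_mulVec_comm {m R : Type*} [Fintype m] [CommSemiring R]
    {M : Matrix m m R} (hM : M.IsSymm) (u v : m → R) : u ⬝ᵥ M *ᵥ v = M *ᵥ u ⬝ᵥ v := by
  rw [dotProduct_mulVec, ← mulVec_transpose, hM.eq]

theorem contDiff_mulVec {E m : Type*} [NormedAddCommGroup E] [NormedSpace ℝ E] [Fintype m]
    {k : WithTop ℕ∞} {M : E → Matrix m m ℝ} {v : E → m → ℝ}
    (hM : ∀ i j, ContDiff ℝ k fun x => M x i j) (hv : ContDiff ℝ k v) :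
    ContDiff ℝ k fun x => M x *ᵥ v x :=
  contDiff_pi.2 fun i => ContDiff.sum fun j _ => (hM i j).mul (contDiff_pi.1 hv j)

section Calculus

variable {n : ℕ}

theorem ContDiff.grad {k m : WithTop ℕ∞} {u : (Fin n → ℝ) → ℝ} (hu : ContDiff ℝ k u)
    (hmk : m + 1 ≤ k) : ContDiff ℝ m (grad u) :=
  contDiff_pi.2 fun _ => (hu.fderiv_right hmk).clm_apply contDiff_const

theorem ContDiff.continuous_dive {V : (Fin n → ℝ) → Fin n → ℝ} (hV : ContDiff ℝ 1 V) :
    Continuous (dive V) :=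
  continuous_finsetSum _ fun i _ =>
    ((contDiff_pi.1 hV i).continuous_fderiv one_ne_zero).clm_apply continuous_const

theorem grad_mul {u v : (Fin n → ℝ) → ℝ} {x : Fin n → ℝ} (hu : DifferentiableAt ℝ u x)
    (hv : DifferentiableAt ℝ v x) :
    grad (fun y => u y * v y) x = u x • grad v x + v x • grad u x := by
  ext i
  simp [grad, fderiv_fun_mul hu hv]

theorem grad_log {u : (Fin n → ℝ) → ℝ} {x : Fin n → ℝ} (hu : DifferentiableAt ℝ u x)
    (hx : u x ≠ 0) : grad (fun y => Real.log (u y)) x = (u x)⁻¹ • grad u x := by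
  ext i
  simp [grad, (hu.hasFDerivAt.log hx).fderiv]

theorem dive_sub {V W : (Fin n → ℝ) → Fin n → ℝ} {x : Fin n → ℝ}
    (hV : DifferentiableAt ℝ V x) (hW : DifferentiableAt ℝ W x) :
    dive (fun y => V y - W y) x = dive V x - dive W x := by
  simp only [dive, ← Finset.sum_sub_distrib, Pi.sub_apply]
  refine Finset.sum_congr rfl fun i _ => ?_
  rw [fderiv_fun_sub (differentiableAt_pi.1 hV i) (differentiableAt_pi.1 hW i)]
  rfl

theorem dive_smul {φ : (Fin n → ℝ) → ℝ} {V : (Fin n → ℝ) → Fin n → ℝ} {x : Fin n → ℝ}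
    (hφ : DifferentiableAt ℝ φ x) (hV : DifferentiableAt ℝ V x) :
    dive (fun y => φ y • V y) x = grad φ x ⬝ᵥ V x + φ x * dive V x := by
  simp only [dive, grad, dotProduct, Finset.mul_sum, ← Finset.sum_add_distrib, Pi.smul_apply,
    smul_eq_mul]
  refine Finset.sum_congr rfl fun i _ => ?_
  rw [fderiv_fun_mul hφ (differentiableAt_pi.1 hV i)]
  simp only [_root_.add_apply, _root_.smul_apply, smul_eq_mul]
  ring

end Calculus

section CompactSupport

variable {E : Type*} [NormedAddCommGroup E] [NormedSpace ℝ E] [MeasurableSpace E]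
  [BorelSpace E] {μ : Measure E} [μ.IsAddHaarMeasure] {u : E → ℝ}

theorem ContDiff.integrable_fderiv_apply (hu : ContDiff ℝ 1 u) (hcu : HasCompactSupport u)
    (v : E) : Integrable (fun x => fderiv ℝ u x v) μ :=
  ((hu.continuous_fderiv one_ne_zero).clm_apply continuous_const).integrable_of_hasCompactSupport
    (hcu.fderiv_apply ℝ v)

theorem integral_fderiv_apply_eq_zero [FiniteDimensional ℝ E] (hu : ContDiff ℝ 1 u)
    (hcu : HasCompactSupport u) (v : E) :
    ∫ x, fderiv ℝ u x v ∂μ = 0 := by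
  have := integral_mul_fderiv_eq_neg_fderiv_mul_of_integrable (μ := μ) (f := fun _ => (1 : ℝ))
    (g := u) (v := v) (by simp) (by simpa using hu.integrable_fderiv_apply hcu v)
    (by simpa using hu.continuous.integrable_of_hasCompactSupport hcu)
    (fun _ _ => differentiableAt_const _) (fun x _ => hu.differentiable one_ne_zero x)
  simpa using this

end CompactSupport

section Divergence

variable {n : ℕ} {V : (Fin n → ℝ) → Fin n → ℝ}

theorem HasCompactSupport.component (hcV : HasCompactSupport V) (i : Fin n) :
    HasCompactSupport fun x => V x i :=
  hcV.comp_left (g := fun v : Fin n → ℝ => v i) rfl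

theorem integrable_dive (hV : ContDiff ℝ 1 V) (hcV : HasCompactSupport V) :
    Integrable (dive V) :=
  integrable_finsetSum _ fun i _ =>
    (contDiff_pi.1 hV i).integrable_fderiv_apply (hcV.component i) _

theorem integral_dive_eq_zero (hV : ContDiff ℝ 1 V) (hcV : HasCompactSupport V) :
    ∫ x, dive V x = 0 := by
  unfold dive
  rw [integral_finsetSum _ fun i _ =>
    (contDiff_pi.1 hV i).integrable_fderiv_apply (hcV.component i) _]
  exact Finset.sum_eq_zero fun i _ =>
    integral_fderiv_apply_eq_zero (contDiff_pi.1 hV i) (hcV.component i) _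

end Divergence

section Generator

variable {n : ℕ}

noncomputable def localGenerator (β : ℝ) (A : (Fin n → ℝ) → Matrix (Fin n) (Fin n) ℝ)
    (b : (Fin n → ℝ) → Fin n → ℝ) (f : (Fin n → ℝ) → ℝ) (x : Fin n → ℝ) : ℝ :=
  b x ⬝ᵥ grad f x + β⁻¹ * dive (fun y => A y *ᵥ grad f y) x

theorem integrable_localGenerator_mul {β : ℝ} {A : (Fin n → ℝ) → Matrix (Fin n) (Fin n) ℝ}
    {b : (Fin n → ℝ) → Fin n → ℝ} {f g ρ : (Fin n → ℝ) → ℝ}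
    (hA : ∀ i j, ContDiff ℝ 1 fun x => A x i j) (hb : Continuous b) (hf : ContDiff ℝ 2 f)
    (hg : Continuous g) (hcg : HasCompactSupport g) (hρ : Continuous ρ) :
    Integrable fun x => localGenerator β A b f x * g x * ρ x := by
  have hgradf : ContDiff ℝ 1 (grad f) := hf.grad le_rfl
  have hcont : Continuous (localGenerator β A b f) :=
    (hb.dotProduct hgradf.continuous).add
      (continuous_const.mul (contDiff_mulVec hA hgradf).continuous_dive)
  exact ((hcont.mul hg).mul hρ).integrable_of_hasCompactSupport hcg.mul_left.mul_right

theorem localGenerator_mul_sub_eq_add_dive {β : ℝ}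
    {A : (Fin n → ℝ) → Matrix (Fin n) (Fin n) ℝ} {b : (Fin n → ℝ) → Fin n → ℝ}
    {f g ρ : (Fin n → ℝ) → ℝ} {x : Fin n → ℝ} (hAx : (A x).IsSymm)
    (hρ : DifferentiableAt ℝ ρ x) (hρx : ρ x ≠ 0)
    (hf : DifferentiableAt ℝ f x) (hg : DifferentiableAt ℝ g x)
    (hAf : DifferentiableAt ℝ (fun y => A y *ᵥ grad f y) x)
    (hAg : DifferentiableAt ℝ (fun y => A y *ᵥ grad g y) x) :
    localGenerator β A b f x * g x * ρ x - localGenerator β A b g x * f x * ρ x =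
      ((b x - β⁻¹ • (A x *ᵥ grad (fun y => Real.log (ρ y)) x)) ⬝ᵥ
          (g x • grad f x - f x • grad g x)) * ρ x +
        β⁻¹ * dive (fun y => (ρ y * g y) • (A y *ᵥ grad f y) -
          (ρ y * f y) • (A y *ᵥ grad g y)) x := by
  have hρg : DifferentiableAt ℝ (fun y => ρ y * g y) x := hρ.mul hg
  have hρf : DifferentiableAt ℝ (fun y => ρ y * f y) x := hρ.mul hf
  rw [dive_sub (hρg.fun_smul hAf) (hρf.fun_smul hAg), dive_smul hρg hAf, dive_smul hρf hAg,
    grad_mul hρ hg, grad_mul hρ hf, grad_log hρ hρx]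
  unfold localGenerator
  simp only [add_dotProduct, smul_dotProduct, sub_dotProduct, dotProduct_sub, dotProduct_smul,
    mulVec_smul, smul_eq_mul]
  rw [hAx.dotProduct_mulVec_comm (grad g x), dotProduct_comm (A x *ᵥ grad g x),
    hAx.dotProduct_mulVec_comm (grad ρ x), hAx.dotProduct_mulVec_comm (grad ρ x)]
  field_simp
  ring

end Generator

theorem stmt_5_general (n : ℕ) (β : ℝ)
    (A : (Fin n → ℝ) → Matrix (Fin n) (Fin n) ℝ)
    (b : (Fin n → ℝ) → (Fin n → ℝ)) (ρ : (Fin n → ℝ) → ℝ)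
    (hA : ∀ i j, ContDiff ℝ 1 fun x => A x i j) (hAsymm : ∀ x, (A x).IsSymm)
    (hb : Continuous b)
    (hρ : ContDiff ℝ 1 ρ) (hρpos : ∀ x, 0 < ρ x) :
    ∀ f g : (Fin n → ℝ) → ℝ,
      ContDiff ℝ (⊤ : ℕ∞) f → HasCompactSupport f →
      ContDiff ℝ (⊤ : ℕ∞) g → HasCompactSupport g →
      (∫ x, (b x ⬝ᵥ grad f x + β⁻¹ * dive (fun y => (A y) *ᵥ grad f y) x) * g x * ρ x) -
        (∫ x, (b x ⬝ᵥ grad g x + β⁻¹ * dive (fun y => (A y) *ᵥ grad g y) x) * f x * ρ x) =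
      ∫ x, ((b x - β⁻¹ • ((A x) *ᵥ grad (fun y => Real.log (ρ y)) x)) ⬝ᵥ
        (g x • grad f x - f x • grad g x)) * ρ x := by
  intro f g hf hcf hg hcg
  have hf2 : ContDiff ℝ 2 f := hf.of_le (WithTop.coe_le_coe.2 le_top)
  have hg2 : ContDiff ℝ 2 g := hg.of_le (WithTop.coe_le_coe.2 le_top)
  have hAf : ContDiff ℝ 1 fun y => A y *ᵥ grad f y := contDiff_mulVec hA (hf2.grad le_rfl)
  have hAg : ContDiff ℝ 1 fun y => A y *ᵥ grad g y := contDiff_mulVec hA (hg2.grad le_rfl)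
  set w := fun y => (ρ y * g y) • (A y *ᵥ grad f y) - (ρ y * f y) • (A y *ᵥ grad g y)
  have hw : ContDiff ℝ 1 w :=
    ((hρ.mul (hg2.of_le one_le_two)).smul hAf).sub ((hρ.mul (hf2.of_le one_le_two)).smul hAg)
  have hcw : HasCompactSupport w := hcg.mul_left.smul_right.sub hcf.mul_left.smul_right
  have hIf := integrable_localGenerator_mul (β := β) hA hb hf2 hg.continuous hcg hρ.continuous
  have hIg := integrable_localGenerator_mul (β := β) hA hb hg2 hf.continuous hcf hρ.continuous
  have hdiff x := localGenerator_mul_sub_eq_add_dive (β := β) (b := b) (hAsymm x)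
    (hρ.differentiable one_ne_zero x) (hρpos x).ne' (hf.differentiable (by simp) x)
    (hg.differentiable (by simp) x) (hAf.differentiable one_ne_zero x)
    (hAg.differentiable one_ne_zero x)
  show (∫ x, localGenerator β A b f x * g x * ρ x) -
    ∫ x, localGenerator β A b g x * f x * ρ x = _
  calc
    _ = (∫ x, (localGenerator β A b f x * g x * ρ x - localGenerator β A b g x * f x * ρ x)) -
          ∫ x, β⁻¹ * dive w x := by
      rw [integral_sub hIf hIg, integral_const_mul, integral_dive_eq_zero hw hcw, mul_zero,
        sub_zero]
    _ = _ := by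
      rw [← integral_sub (hIf.sub' hIg) ((integrable_dive hw hcw).const_mul _)]
      exact integral_congr_ae (ae_of_all _ fun x => sub_eq_of_eq_add (hdiff x))

theorem stmt_5 (n : ℕ) (hn : 1 ≤ n) (β : ℝ) (hβ : 0 < β)
    (A : (Fin n → ℝ) → Matrix (Fin n) (Fin n) ℝ)
    (b : (Fin n → ℝ) → (Fin n → ℝ)) (ρ : (Fin n → ℝ) → ℝ)
    (hA : ∀ i j, ContDiff ℝ 1 fun x => A x i j) (hAsymm : ∀ x, (A x).IsSymm)
    (hb : Continuous b)
    (hρ : ContDiff ℝ 1 ρ) (hρpos : ∀ x, 0 < ρ x) :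
    ∀ f g : (Fin n → ℝ) → ℝ,
      ContDiff ℝ (⊤ : ℕ∞) f → HasCompactSupport f →
      ContDiff ℝ (⊤ : ℕ∞) g → HasCompactSupport g →
      (∫ x, (b x ⬝ᵥ grad f x + β⁻¹ * dive (fun y => (A y) *ᵥ grad f y) x) * g x * ρ x) -
        (∫ x, (b x ⬝ᵥ grad g x + β⁻¹ * dive (fun y => (A y) *ᵥ grad g y) x) * f x * ρ x) =
      ∫ x, ((b x - β⁻¹ • ((A x) *ᵥ grad (fun y => Real.log (ρ y)) x)) ⬝ᵥ
        (g x • grad f x - f x • grad g x)) * ρ x :=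
  stmt_5_general n β A b ρ hA hAsymm hb hρ hρpos
end

section
/- Let n ≥ 1 and β > 0. Let ρ : ℝⁿ → (0,∞) be twice continuously differentiable, b : ℝⁿ → ℝⁿ continuously differentiable, A : ℝⁿ → ℝ^{n×n} continuously differentiable, and k : ℝⁿ × ℝⁿ → [0,∞) measurable such that for every x the functions y ↦ k(y,x)ρ(y) and y ↦ k(x,y) are integrable on ℝⁿ. Define the time-reversed drift b^R(x) := −b(x) + 2β⁻¹A(x)∇log ρ(x) and the time-reversed jump kernel k^R(x,y) := ρ(y)k(y,x)/ρ(x). Then for every x ∈ ℝⁿ, ∇·(−b^R ρ + β⁻¹A∇ρ)(x) + ∫_{ℝⁿ}(k^R(y,x)ρ(y) − k^R(x,y)ρ(x)) dy = −[∇·(−bρ + β⁻¹A∇ρ)(x) + ∫_{ℝⁿ}(k(y,x)ρ(y) − k(x,y)ρ(x)) dy]. -/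
open MeasureTheory Matrix

/-! Since `ρ bᴿ = -ρ b + 2β⁻¹ A∇ρ`, the diffusive flux `-bᴿρ + β⁻¹A∇ρ` of the reversed process is
exactly minus that of the forward process, and the divergence is linear. For the jumps,
`kᴿ(y,x) ρ(y) = ρ(x) k(x,y)` and `kᴿ(x,y) ρ(x) = ρ(y) k(y,x)`: the reversed kernel swaps gain and
loss, so the jump integrand changes sign pointwise. -/

theorem grad_log_of_ne_zero {n : ℕ} {f : (Fin n → ℝ) → ℝ} {x : Fin n → ℝ}
    (hf : DifferentiableAt ℝ f x) (hx : f x ≠ 0) :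
    grad (fun y => Real.log (f y)) x = (f x)⁻¹ • grad f x := by
  funext i
  simp [grad, (hf.hasFDerivAt.log hx).fderiv]

theorem dive_neg {n : ℕ} (v : (Fin n → ℝ) → (Fin n → ℝ)) (x : Fin n → ℝ) :
    dive (fun y => -v y) x = -dive v x := by
  simp only [dive, Pi.neg_apply, fderiv_fun_neg, _root_.neg_apply,
    Finset.sum_neg_distrib]

theorem neg_smul_add_reversedDrift {E : Type*} [AddCommGroup E] [Module ℝ E]
    {r : ℝ} (hr : r ≠ 0) (c : ℝ) (u g : E) :
    -(r • (-u + (2 * c) • r⁻¹ • g)) + c • g = -(-(r • u) + c • g) := by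
  rw [smul_add, smul_comm r (2 * c), smul_inv_smul₀ hr]
  module

theorem integral_reversedJump {α : Type*} [MeasurableSpace α] (μ : Measure α)
    {ρ : α → ℝ} (hρ : ∀ x, ρ x ≠ 0) (k : α → α → ℝ) (x : α) :
    ∫ y, (ρ x * k x y / ρ y * ρ y - ρ y * k y x / ρ x * ρ x) ∂μ =
      -∫ y, (k y x * ρ y - k x y * ρ x) ∂μ := by
  rw [← integral_neg]
  congr 1 with y
  field_simp [hρ x, hρ y]
  ring

theorem stmt_13_general (n : ℕ) (β : ℝ)
    (ρ : (Fin n → ℝ) → ℝ) (hρ : ContDiff ℝ 2 ρ) (hρpos : ∀ x, 0 < ρ x)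
    (b : (Fin n → ℝ) → (Fin n → ℝ))
    (A : (Fin n → ℝ) → Matrix (Fin n) (Fin n) ℝ)
    (k : (Fin n → ℝ) → (Fin n → ℝ) → ℝ)
    (bR : (Fin n → ℝ) → (Fin n → ℝ))
    (hbR : ∀ x, bR x = -b x + (2 * β⁻¹) • ((A x) *ᵥ grad (fun y => Real.log (ρ y)) x))
    (kR : (Fin n → ℝ) → (Fin n → ℝ) → ℝ)
    (hkR : ∀ x y, kR x y = ρ y * k y x / ρ x) :
    ∀ x, dive (fun y => -(ρ y • bR y) + β⁻¹ • ((A y) *ᵥ grad ρ y)) x +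
        (∫ y, (kR y x * ρ y - kR x y * ρ x)) =
      -(dive (fun y => -(ρ y • b y) + β⁻¹ • ((A y) *ᵥ grad ρ y)) x +
        ∫ y, (k y x * ρ y - k x y * ρ x)) := by
  intro x
  have hρne : ∀ y, ρ y ≠ 0 := fun y => (hρpos y).ne'
  have hflux : (fun y => -(ρ y • bR y) + β⁻¹ • ((A y) *ᵥ grad ρ y)) =
      fun y => -(-(ρ y • b y) + β⁻¹ • ((A y) *ᵥ grad ρ y)) := by
    funext y
    rw [hbR, grad_log_of_ne_zero (hρ.differentiable two_ne_zero y) (hρne y), mulVec_smul,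
      neg_smul_add_reversedDrift (hρne y)]
  simp only [hkR]
  rw [hflux, dive_neg, integral_reversedJump volume hρne, neg_add]

theorem stmt_13 (n : ℕ) (hn : 1 ≤ n) (β : ℝ) (hβ : 0 < β)
    (ρ : (Fin n → ℝ) → ℝ) (hρ : ContDiff ℝ 2 ρ) (hρpos : ∀ x, 0 < ρ x)
    (b : (Fin n → ℝ) → (Fin n → ℝ)) (hb : ContDiff ℝ 1 b)
    (A : (Fin n → ℝ) → Matrix (Fin n) (Fin n) ℝ)
    (hA : ∀ i j, ContDiff ℝ 1 fun x => A x i j)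
    (k : (Fin n → ℝ) → (Fin n → ℝ) → ℝ)
    (hkmeas : Measurable fun p : (Fin n → ℝ) × (Fin n → ℝ) => k p.1 p.2)
    (hknonneg : ∀ x y, 0 ≤ k x y)
    (hkint1 : ∀ x, Integrable fun y => k y x * ρ y)
    (hkint2 : ∀ x, Integrable fun y => k x y)
    (bR : (Fin n → ℝ) → (Fin n → ℝ))
    (hbR : ∀ x, bR x = -b x + (2 * β⁻¹) • ((A x) *ᵥ grad (fun y => Real.log (ρ y)) x))
    (kR : (Fin n → ℝ) → (Fin n → ℝ) → ℝ)
    (hkR : ∀ x y, kR x y = ρ y * k y x / ρ x) :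
    ∀ x, dive (fun y => -(ρ y • bR y) + β⁻¹ • ((A y) *ᵥ grad ρ y)) x +
        (∫ y, (kR y x * ρ y - kR x y * ρ x)) =
      -(dive (fun y => -(ρ y • b y) + β⁻¹ • ((A y) *ᵥ grad ρ y)) x +
        ∫ y, (k y x * ρ y - k x y * ρ x)) :=
  stmt_13_general n β ρ hρ hρpos b A k bR hbR kR hkR
end

section
/- Let n ≥ 1 and let V : ℝⁿ → ℝ be continuously differentiable with x ↦ e^{−V(x)} integrable on ℝⁿ. Define the generator 𝓛f(x) := −∇V(x)·∇f(x) + Δf(x) + ∫_{ℝⁿ}(f(z) − f(x)) e^{−V(z)} dz. Then for all smooth compactly supported f, g : ℝⁿ → ℝ, ∫_{ℝⁿ} f(x) 𝓛g(x) e^{−V(x)} dx = ∫_{ℝⁿ} g(x) 𝓛f(x) e^{−V(x)} dx. -/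
open MeasureTheory Matrix

/-- The Laplacian of a scalar function on `ℝⁿ`. -/
noncomputable def lap {n : ℕ} (f : (Fin n → ℝ) → ℝ) (x : Fin n → ℝ) : ℝ :=
  ∑ i, fderiv ℝ (fun y => fderiv ℝ f y (Pi.single i 1)) x (Pi.single i 1)

/-!
With `ρ = exp (-V)`, the product rule `∂ᵢ(f ρ) = (∂ᵢf - f ∂ᵢV) ρ` and integration by parts in
each coordinate turn `∫ f (-∇V · ∇g + Δg) ρ` into `-∫ ∇f · ∇g ρ`. The jump term contributes
`(∫ g ρ)(∫ f ρ) - (∫ ρ)(∫ f g ρ)`, which is detailed balance for the kernel `k(x, z) = exp (-V z)`.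
Both expressions are symmetric in `f` and `g`.
-/

section WeightedIntegrationByParts

variable {E : Type*} [NormedAddCommGroup E] [NormedSpace ℝ E]

theorem fderiv_mul_exp_neg_apply {V f : E → ℝ} {x : E} (hV : DifferentiableAt ℝ V x)
    (hf : DifferentiableAt ℝ f x) (v : E) :
    fderiv ℝ (fun y => f y * Real.exp (-V y)) x v
      = (fderiv ℝ f x v - f x * fderiv ℝ V x v) * Real.exp (-V x) := by
  have hderiv : HasFDerivAt (fun y => f y * Real.exp (-V y))
      (f x • (Real.exp (-V x) • -fderiv ℝ V x) + Real.exp (-V x) • fderiv ℝ f x) x :=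
    hf.hasFDerivAt.mul hV.hasFDerivAt.neg.exp
  rw [hderiv.fderiv]
  simp only [_root_.add_apply, _root_.smul_apply, _root_.neg_apply, smul_eq_mul]
  ring

variable [FiniteDimensional ℝ E] [MeasurableSpace E] [BorelSpace E] {μ : Measure E}
  [μ.IsAddHaarMeasure]

theorem integral_mul_fderiv_sub_fderiv_mul_exp_neg {V f G : E → ℝ} (hV : ContDiff ℝ 1 V)
    (hf : ContDiff ℝ 1 f) (hfs : HasCompactSupport f) (hG : ContDiff ℝ 1 G) (v : E) :
    ∫ x, f x * (fderiv ℝ G x v - fderiv ℝ V x v * G x) * Real.exp (-V x) ∂μ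
      = -∫ x, fderiv ℝ f x v * G x * Real.exp (-V x) ∂μ := by
  have hVd : Differentiable ℝ V := hV.differentiable one_ne_zero
  have hfd : Differentiable ℝ f := hf.differentiable one_ne_zero
  have hρ : Continuous fun x => Real.exp (-V x) := by fun_prop (disch := exact hV.continuous)
  have hV' : Continuous fun x => fderiv ℝ V x v :=
    (hV.continuous_fderiv one_ne_zero).clm_apply continuous_const
  have hf' : Continuous fun x => fderiv ℝ f x v :=
    (hf.continuous_fderiv one_ne_zero).clm_apply continuous_const
  have hG' : Continuous fun x => fderiv ℝ G x v :=
    (hG.continuous_fderiv one_ne_zero).clm_apply continuous_const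
  have hdrift : Integrable (fun x => f x * Real.exp (-V x) * (fderiv ℝ V x v * G x)) μ :=
    ((hf.continuous.mul hρ).mul (hV'.mul hG.continuous)).integrable_of_hasCompactSupport
      hfs.mul_right.mul_right
  have hdiff : Integrable (fun x => fderiv ℝ f x v * G x * Real.exp (-V x)) μ :=
    ((hf'.mul hG.continuous).mul hρ).integrable_of_hasCompactSupport
      ((hfs.fderiv_apply (𝕜 := ℝ) v).mul_right.mul_right)
  have hdiv : Integrable (fun x => f x * Real.exp (-V x) * fderiv ℝ G x v) μ :=
    ((hf.continuous.mul hρ).mul hG').integrable_of_hasCompactSupport hfs.mul_right.mul_right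
  have hsplit : (fun x => fderiv ℝ (fun y => f y * Real.exp (-V y)) x v * G x)
      = fun x => fderiv ℝ f x v * G x * Real.exp (-V x)
          - f x * Real.exp (-V x) * (fderiv ℝ V x v * G x) := by
    ext x
    rw [fderiv_mul_exp_neg_apply (hVd x) (hfd x)]
    ring
  have ibp := integral_mul_fderiv_eq_neg_fderiv_mul_of_integrable (μ := μ) (v := v)
    (f := fun y => f y * Real.exp (-V y)) (g := G) (hsplit ▸ hdiff.sub hdrift) hdiv
    (((hf.continuous.mul hρ).mul hG.continuous).integrable_of_hasCompactSupport
      hfs.mul_right.mul_right)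
    (fun x _ => (hfd x).mul (hVd x).neg.exp)
    (fun x _ => hG.differentiable one_ne_zero x)
  rw [hsplit, integral_sub hdiff hdrift] at ibp
  calc ∫ x, f x * (fderiv ℝ G x v - fderiv ℝ V x v * G x) * Real.exp (-V x) ∂μ
      = ∫ x, f x * Real.exp (-V x) * fderiv ℝ G x v ∂μ
          - ∫ x, f x * Real.exp (-V x) * (fderiv ℝ V x v * G x) ∂μ := by
        rw [← integral_sub hdiv hdrift]
        exact integral_congr_ae (.of_forall fun x => by ring)
    _ = -∫ x, fderiv ℝ f x v * G x * Real.exp (-V x) ∂μ := by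
        rw [ibp]; ring

end WeightedIntegrationByParts

theorem integral_sub_const_mul {α : Type*} [MeasurableSpace α] {μ : Measure α} {g ρ : α → ℝ}
    (hgρ : Integrable (fun z => g z * ρ z) μ) (hρ : Integrable ρ μ) (c : ℝ) :
    ∫ z, (g z - c) * ρ z ∂μ = ∫ z, g z * ρ z ∂μ - c * ∫ z, ρ z ∂μ := by
  simp only [sub_mul]
  rw [integral_sub hgρ (hρ.const_mul c), integral_const_mul]

section Generator

variable {n : ℕ}

theorem contDiff_grad_apply {g : (Fin n → ℝ) → ℝ} (hg : ContDiff ℝ 2 g) (i : Fin n) :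
    ContDiff ℝ 1 fun x => grad g x i :=
  (hg.fderiv_right le_rfl).clm_apply contDiff_const

theorem continuous_grad_apply {g : (Fin n → ℝ) → ℝ} (hg : ContDiff ℝ 1 g) (i : Fin n) :
    Continuous fun x => grad g x i :=
  (hg.continuous_fderiv one_ne_zero).clm_apply continuous_const

theorem integral_mul_neg_grad_dotProduct_add_lap {V f g : (Fin n → ℝ) → ℝ}
    (hV : ContDiff ℝ 1 V) (hf : ContDiff ℝ 1 f) (hfs : HasCompactSupport f)
    (hg : ContDiff ℝ 2 g) :
    ∫ x, f x * (-(grad V x ⬝ᵥ grad g x) + lap g x) * Real.exp (-V x)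
      = -∫ x, (grad f x ⬝ᵥ grad g x) * Real.exp (-V x) := by
  have hρ : Continuous fun x => Real.exp (-V x) := by fun_prop (disch := exact hV.continuous)
  have hpoint : ∀ x, f x * (-(grad V x ⬝ᵥ grad g x) + lap g x) * Real.exp (-V x)
      = ∑ i, f x * (fderiv ℝ (fun y => grad g y i) x (Pi.single i 1)
          - fderiv ℝ V x (Pi.single i 1) * grad g x i) * Real.exp (-V x) := by
    intro x
    simp only [lap, grad, dotProduct, ← Finset.sum_mul, ← Finset.mul_sum, Finset.sum_sub_distrib]
    ring
  have hterm : ∀ i, Integrable fun x => f x * (fderiv ℝ (fun y => grad g y i) x (Pi.single i 1)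
      - fderiv ℝ V x (Pi.single i 1) * grad g x i) * Real.exp (-V x) := fun i =>
    ((hf.continuous.mul ((continuous_grad_apply (contDiff_grad_apply hg i) i).sub
      ((continuous_grad_apply hV i).mul (continuous_grad_apply (hg.of_le one_le_two) i)))).mul
        hρ).integrable_of_hasCompactSupport hfs.mul_right.mul_right
  calc ∫ x, f x * (-(grad V x ⬝ᵥ grad g x) + lap g x) * Real.exp (-V x)
      = ∑ i, ∫ x, f x * (fderiv ℝ (fun y => grad g y i) x (Pi.single i 1)
          - fderiv ℝ V x (Pi.single i 1) * grad g x i) * Real.exp (-V x) := by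
        simp only [hpoint]
        exact integral_finsetSum _ fun i _ => hterm i
    _ = ∑ i, -∫ x, grad f x i * grad g x i * Real.exp (-V x) :=
        Finset.sum_congr rfl fun i _ =>
          integral_mul_fderiv_sub_fderiv_mul_exp_neg hV hf hfs (contDiff_grad_apply hg i) _
    _ = -∫ x, (grad f x ⬝ᵥ grad g x) * Real.exp (-V x) := by
        rw [Finset.sum_neg_distrib, ← integral_finsetSum]
        · simp only [dotProduct, Finset.sum_mul]
        · exact fun i _ => (((continuous_grad_apply hf i).mul
            (continuous_grad_apply (hg.of_le one_le_two) i)).mul hρ).integrable_of_hasCompactSupport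
              ((hfs.fderiv_apply (𝕜 := ℝ) _).mul_right.mul_right)

theorem integral_mul_generator {V f g : (Fin n → ℝ) → ℝ} (hV : ContDiff ℝ 1 V)
    (hVint : Integrable fun x => Real.exp (-V x)) (hf : ContDiff ℝ 1 f)
    (hfs : HasCompactSupport f) (hg : ContDiff ℝ 2 g) (hgs : HasCompactSupport g) :
    ∫ x, f x * (-(grad V x ⬝ᵥ grad g x) + lap g x + ∫ z, (g z - g x) * Real.exp (-V z))
        * Real.exp (-V x)
      = -(∫ x, (grad f x ⬝ᵥ grad g x) * Real.exp (-V x))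
        + ((∫ z, g z * Real.exp (-V z)) * (∫ x, f x * Real.exp (-V x))
          - (∫ z, Real.exp (-V z)) * (∫ x, f x * g x * Real.exp (-V x))) := by
  have hρ : Continuous fun x => Real.exp (-V x) := by fun_prop (disch := exact hV.continuous)
  have hg1 : ContDiff ℝ 1 g := hg.of_le one_le_two
  have hdiffusion : Continuous fun x => -(grad V x ⬝ᵥ grad g x) + lap g x := by
    simp only [dotProduct, lap]
    exact (continuous_finsetSum _ fun i _ =>
      (continuous_grad_apply hV i).mul (continuous_grad_apply hg1 i)).neg.add
        (continuous_finsetSum _ fun i _ => continuous_grad_apply (contDiff_grad_apply hg i) i)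
  have hfρ : Integrable fun x => f x * Real.exp (-V x) :=
    (hf.continuous.mul hρ).integrable_of_hasCompactSupport hfs.mul_right
  have hfgρ : Integrable fun x => f x * g x * Real.exp (-V x) :=
    ((hf.continuous.mul hg1.continuous).mul hρ).integrable_of_hasCompactSupport
      hfs.mul_right.mul_right
  have hjump := integral_sub_const_mul
    ((hg1.continuous.mul hρ).integrable_of_hasCompactSupport hgs.mul_right) hVint
  have hsplit : ∀ x, f x * (-(grad V x ⬝ᵥ grad g x) + lap g x
        + ∫ z, (g z - g x) * Real.exp (-V z)) * Real.exp (-V x)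
      = f x * (-(grad V x ⬝ᵥ grad g x) + lap g x) * Real.exp (-V x)
        + ((∫ z, g z * Real.exp (-V z)) * (f x * Real.exp (-V x))
          - (∫ z, Real.exp (-V z)) * (f x * g x * Real.exp (-V x))) := by
    intro x; rw [hjump]; ring
  simp only [hsplit]
  rw [integral_add, integral_sub (hfρ.const_mul _) (hfgρ.const_mul _), integral_const_mul,
    integral_const_mul, integral_mul_neg_grad_dotProduct_add_lap hV hf hfs hg]
  · exact ((hf.continuous.mul hdiffusion).mul hρ).integrable_of_hasCompactSupport
      hfs.mul_right.mul_right
  · exact (hfρ.const_mul _).sub (hfgρ.const_mul _)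

end Generator

theorem stmt_17_general (n : ℕ)
    (V : (Fin n → ℝ) → ℝ) (hV : ContDiff ℝ 1 V)
    (hVint : Integrable fun x => Real.exp (-V x))
    (L : ((Fin n → ℝ) → ℝ) → (Fin n → ℝ) → ℝ)
    (hL : ∀ f x, L f x = -(grad V x ⬝ᵥ grad f x) + lap f x +
      ∫ z, (f z - f x) * Real.exp (-V z)) :
    ∀ f g : (Fin n → ℝ) → ℝ,
      ContDiff ℝ (⊤ : ℕ∞) f → HasCompactSupport f →
      ContDiff ℝ (⊤ : ℕ∞) g → HasCompactSupport g →
      ∫ x, f x * L g x * Real.exp (-V x) = ∫ x, g x * L f x * Real.exp (-V x) := by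
  intro f g hf hfs hg hgs
  have h2 : (2 : WithTop ℕ∞) ≤ (⊤ : ℕ∞) := WithTop.coe_le_coe.mpr le_top
  simp only [hL]
  rw [integral_mul_generator hV hVint (hf.of_le (one_le_two.trans h2)) hfs (hg.of_le h2) hgs,
    integral_mul_generator hV hVint (hg.of_le (one_le_two.trans h2)) hgs (hf.of_le h2) hfs]
  simp only [dotProduct_comm (grad g _), mul_comm (g _) (f _)]
  ring

theorem stmt_17 (n : ℕ) (hn : 1 ≤ n)
    (V : (Fin n → ℝ) → ℝ) (hV : ContDiff ℝ 1 V)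
    (hVint : Integrable fun x => Real.exp (-V x))
    (L : ((Fin n → ℝ) → ℝ) → (Fin n → ℝ) → ℝ)
    (hL : ∀ f x, L f x = -(grad V x ⬝ᵥ grad f x) + lap f x +
      ∫ z, (f z - f x) * Real.exp (-V z)) :
    ∀ f g : (Fin n → ℝ) → ℝ,
      ContDiff ℝ (⊤ : ℕ∞) f → HasCompactSupport f →
      ContDiff ℝ (⊤ : ℕ∞) g → HasCompactSupport g →
      ∫ x, f x * L g x * Real.exp (-V x) = ∫ x, g x * L f x * Real.exp (-V x) :=
  stmt_17_general n V hV hVint L hL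
end
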